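/- Let P be a reduced labeled oriented tree whose maximal proper sub-LOTs T₁, …, Tₙ are pairwise disjoint. Choose a vertex tᵢ in each Tᵢ, replace every edge label of P lying in Tᵢ by tᵢ, and collapse each Tᵢ to the vertex tᵢ, obtaining a labeled oriented tree P′. Then P′ is compressed, i.e., no edge of P′ is labeled with one of its own endpoints. -/

import Mathlib

/-- A labeled oriented graph (LOG): each edge `e` has an initial vertex `init e`,
a terminal vertex `term e`, and a label `label e`, which is a vertex.
An edge `e = [x,z,y]` has `init e = x`, `label e = z`, `term e = y`. -/
structure LOG (V E : Type) where
  init : E → V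
  label : E → V
  term : E → V

namespace LOG

variable {V E : Type}

/-- The underlying simple graph of a LOG. -/
def graph (G : LOG V E) : SimpleGraph V :=
  SimpleGraph.fromRel fun a b => ∃ e, G.init e = a ∧ G.term e = b

/-- The underlying unoriented multigraph is a tree: there are no loops, distinct
edges have distinct endpoint pairs, and the underlying simple graph is a tree. -/
def IsTreeGraph (G : LOG V E) : Prop :=
  (∀ e, G.init e ≠ G.term e) ∧
    Function.Injective (fun e => s(G.init e, G.term e)) ∧ G.graph.IsTree

/-- A LOG is injective if each vertex occurs at most once as an edge label. -/
def InjectiveLabels (G : LOG V E) : Prop := Function.Injective G.label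

/-- The simple graph induced by a subgraph, given by a vertex set `VS` and an edge set `ES`. -/
def subgraph (G : LOG V E) (VS : Set V) (ES : Set E) : SimpleGraph VS :=
  SimpleGraph.fromRel fun a b => ∃ e ∈ ES, G.init e = (a : V) ∧ G.term e = (b : V)

/-- A sub-LOT: a connected subgraph containing at least one edge, all of whose
edge labels are vertices of the subgraph. -/
structure IsSubLOT (G : LOG V E) (VS : Set V) (ES : Set E) : Prop where
  edge_nonempty : ES.Nonempty
  init_mem : ∀ e ∈ ES, G.init e ∈ VS
  term_mem : ∀ e ∈ ES, G.term e ∈ VS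
  label_mem : ∀ e ∈ ES, G.label e ∈ VS
  connected : (G.subgraph VS ES).Connected

end LOG

namespace LOG

variable {V E : Type}

/-- A proper sub-LOT: a sub-LOT that is not all of `G`. -/
def IsProperSubLOT (G : LOG V E) (VS : Set V) (ES : Set E) : Prop :=
  G.IsSubLOT VS ES ∧ ¬(VS = Set.univ ∧ ES = Set.univ)

/-- A maximal proper sub-LOT: a proper sub-LOT not properly contained in any
other proper sub-LOT. -/
def IsMaxProperSubLOT (G : LOG V E) (VS : Set V) (ES : Set E) : Prop :=
  G.IsProperSubLOT VS ES ∧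
    ∀ VS' ES', G.IsProperSubLOT VS' ES' → VS ⊆ VS' → ES ⊆ ES' → VS = VS' ∧ ES = ES'

end LOG

namespace LOG

variable {V E : Type}

/-- A LOG is compressed if no edge is labeled with one of its own endpoints. -/
def Compressed (G : LOG V E) : Prop := ∀ e, G.label e ≠ G.init e ∧ G.label e ≠ G.term e

/-- A LOG is boundary reduced if every boundary vertex (vertex of valency one)
occurs as an edge label. -/
def BoundaryReduced (G : LOG V E) : Prop :=
  ∀ v : V, (∃! e, G.init e = v ∨ G.term e = v) → ∃ e, G.label e = v

/-- A LOG is interior reduced if no vertex has two adjacent edges with the same label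
that both point away from, or both point towards, that vertex. -/
def InteriorReduced (G : LOG V E) : Prop :=
  ∀ e f, e ≠ f → G.label e = G.label f → G.init e ≠ G.init f ∧ G.term e ≠ G.term f

/-- A LOG is reduced if it is compressed, boundary reduced and interior reduced. -/
def Reduced (G : LOG V E) : Prop := G.Compressed ∧ G.BoundaryReduced ∧ G.InteriorReduced

end LOG

/-!
Suppose an edge `e` outside every `Tᵢ` has its label collapsed onto the image of an endpoint
`x`. Then the label and `x` coincide, which compression of `P` excludes, or lie in a common
`Tᵢ`. Both endpoints of `e` cannot lie in `Tᵢ`: every edge of a tree is a bridge, so a connected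
subgraph containing both endpoints of an edge contains the edge. Hence adding `e` to `Tᵢ` gives
a strictly larger sub-LOT, and it is still proper: otherwise the endpoint of `e` outside `Tᵢ`
would be a boundary vertex of `P` labelling no edge, against boundary reducedness. This
contradicts the maximality of `Tᵢ`.
-/

namespace LOG

variable {V E : Type} {P : LOG V E} {VS VS' : Set V} {ES ES' : Set E}

lemma subgraph_adj_iff {a b : VS} :
    (P.subgraph VS ES).Adj a b ↔ a ≠ b ∧ ∃ f ∈ ES, s(P.init f, P.term f) = s((a : V), b) := by
  simp only [subgraph, SimpleGraph.fromRel_adj, Sym2.eq_iff]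
  grind

lemma graph_adj_iff {a b : V} :
    P.graph.Adj a b ↔ a ≠ b ∧ ∃ f, s(P.init f, P.term f) = s(a, b) := by
  simp only [graph, SimpleGraph.fromRel_adj, Sym2.eq_iff]
  grind

def subgraphHomOfSubset (hV : VS ⊆ VS') (hE : ES ⊆ ES') :
    P.subgraph VS ES →g P.subgraph VS' ES' where
  toFun v := ⟨v, hV v.2⟩
  map_rel' {a b} hab := by
    obtain ⟨hne, f, hf, hfab⟩ := subgraph_adj_iff.mp hab
    exact subgraph_adj_iff.mpr ⟨fun h => hne (Subtype.ext (Subtype.mk.inj h)), f, hE hf, hfab⟩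

theorem IsTreeGraph.mem_of_init_mem_of_term_mem (htree : P.IsTreeGraph)
    (hconn : (P.subgraph VS ES).Preconnected) {e : E} (hi : P.init e ∈ VS)
    (ht : P.term e ∈ VS) : e ∈ ES := by
  by_contra he
  have hadj : P.graph.Adj (P.init e) (P.term e) := graph_adj_iff.mpr ⟨htree.1 e, e, rfl⟩
  have hbridge := SimpleGraph.isAcyclic_iff_forall_adj_isBridge.mp htree.2.2.isAcyclic hadj
  let φ : P.subgraph VS ES →g P.graph.deleteEdges {s(P.init e, P.term e)} :=
    { toFun := Subtype.val
      map_rel' := fun {a b} hab => by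
        obtain ⟨hne, f, hf, hfab⟩ := subgraph_adj_iff.mp hab
        refine SimpleGraph.deleteEdges_adj.mpr
          ⟨graph_adj_iff.mpr ⟨fun h => hne (Subtype.ext h), f, hfab⟩, ?_⟩
        intro hfe
        exact he (htree.2.1 (hfab.trans hfe) ▸ hf) }
  exact SimpleGraph.isBridge_iff.mp hbridge ((hconn ⟨_, hi⟩ ⟨_, ht⟩).map φ)

theorem IsSubLOT.insert_edge (h : P.IsSubLOT VS ES) {e : E} (hl : P.label e ∈ VS)
    (hx : P.init e ∈ VS ∨ P.term e ∈ VS) :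
    P.IsSubLOT (insert (P.init e) (insert (P.term e) VS)) (insert e ES) := by
  set VS' := insert (P.init e) (insert (P.term e) VS)
  have hV : VS ⊆ VS' := (Set.subset_insert _ _).trans (Set.subset_insert _ _)
  have hi : P.init e ∈ VS' := Set.mem_insert _ _
  have ht : P.term e ∈ VS' := Set.mem_insert_of_mem _ (Set.mem_insert _ _)
  refine ⟨Set.insert_nonempty _ _, ?_, ?_, ?_, ?_⟩
  · rintro f (rfl | hf)
    exacts [hi, hV (h.init_mem f hf)]
  · rintro f (rfl | hf)
    exacts [ht, hV (h.term_mem f hf)]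
  · rintro f (rfl | hf)
    exacts [hV hl, hV (h.label_mem f hf)]
  · let ι := subgraphHomOfSubset (P := P) hV (Set.subset_insert e ES)
    have hedge : (P.subgraph VS' (insert e ES)).Reachable ⟨_, hi⟩ ⟨_, ht⟩ := by
      by_cases hloop : P.init e = P.term e
      · exact (Subtype.ext hloop : (⟨_, hi⟩ : VS') = ⟨_, ht⟩) ▸ .rfl
      · exact (subgraph_adj_iff.mpr ⟨fun h' => hloop (Subtype.mk.inj h'), e,
          Set.mem_insert _ _, rfl⟩).reachable
    have hfrom : ∀ u : VS', ∃ w : VS, (P.subgraph VS' (insert e ES)).Reachable (ι w) u := by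
      rintro ⟨u, rfl | rfl | hu⟩ <;> [skip; skip; exact ⟨⟨u, hu⟩, .rfl⟩]
      · rcases hx with hx | hx
        exacts [⟨⟨_, hx⟩, .rfl⟩, ⟨⟨_, hx⟩, hedge.symm⟩]
      · rcases hx with hx | hx
        exacts [⟨⟨_, hx⟩, hedge⟩, ⟨⟨_, hx⟩, .rfl⟩]
    refine @SimpleGraph.Connected.mk _ _ (fun u v => ?_) ⟨⟨_, hi⟩⟩
    obtain ⟨wu, hwu⟩ := hfrom u
    obtain ⟨wv, hwv⟩ := hfrom v
    exact hwu.symm.trans (((h.connected wu wv).map ι).trans hwv)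

theorem IsSubLOT.insert_ne_univ (hc : P.Compressed) (hb : P.BoundaryReduced)
    (h : P.IsSubLOT VS ES) {e : E} {w : V} (hw : P.init e = w ∨ P.term e = w) (hwVS : w ∉ VS) :
    insert e ES ≠ Set.univ := by
  intro huniv
  have hES : ∀ f, f ≠ e → f ∈ ES := fun f hfe =>
    (Set.mem_insert_iff.mp (huniv ▸ Set.mem_univ f)).resolve_left hfe
  have hval : ∃! f, P.init f = w ∨ P.term f = w := by
    refine ⟨e, hw, fun f hf => by_contra fun hfe => hwVS ?_⟩
    rcases hf with rfl | rfl
    exacts [h.init_mem f (hES f hfe), h.term_mem f (hES f hfe)]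
  obtain ⟨g, hg⟩ := hb w hval
  have hge : g ≠ e := by
    rintro rfl
    rcases hw with hw | hw
    exacts [(hc g).1 (hg.trans hw.symm), (hc g).2 (hg.trans hw.symm)]
  exact hwVS (hg ▸ h.label_mem g (hES g hge))

theorem IsMaxProperSubLOT.mem_of_label_mem (htree : P.IsTreeGraph) (hred : P.Reduced)
    (hmax : P.IsMaxProperSubLOT VS ES) {e : E} (hl : P.label e ∈ VS)
    (hx : P.init e ∈ VS ∨ P.term e ∈ VS) : e ∈ ES := by
  have hsub := hmax.1.1
  by_cases hboth : P.init e ∈ VS ∧ P.term e ∈ VS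
  · exact htree.mem_of_init_mem_of_term_mem hsub.connected.preconnected hboth.1 hboth.2
  obtain ⟨w, hw, hwVS⟩ : ∃ w, (P.init e = w ∨ P.term e = w) ∧ w ∉ VS := by
    by_cases hi : P.init e ∈ VS
    exacts [⟨_, Or.inr rfl, fun ht => hboth ⟨hi, ht⟩⟩, ⟨_, Or.inl rfl, hi⟩]
  have hproper : P.IsProperSubLOT _ _ :=
    ⟨hsub.insert_edge hl hx, fun h => hsub.insert_ne_univ hred.1 hred.2.1 hw hwVS h.2⟩
  have hV : VS ⊆ insert (P.init e) (insert (P.term e) VS) :=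
    (Set.subset_insert _ _).trans (Set.subset_insert _ _)
  rw [(hmax.2 _ _ hproper hV (Set.subset_insert e ES)).2]
  exact Set.mem_insert e ES

end LOG

section Collapse

variable {V ι : Type*} {VS : ι → Set V} {π : V → V}

theorem mem_iff_of_collapse (hdisj : ∀ i j, i ≠ j → VS i ∩ VS j = ∅)
    (hfix : ∀ v, (∀ i, v ∉ VS i) → π v = v) (hcoll : ∀ i, ∃ t ∈ VS i, ∀ v ∈ VS i, π v = t)
    (v : V) (i : ι) : π v ∈ VS i ↔ v ∈ VS i := by
  refine ⟨fun hπv => ?_, fun hv => ?_⟩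
  · by_cases hv : ∃ j, v ∈ VS j
    · obtain ⟨j, hvj⟩ := hv
      obtain ⟨t, ht, hπ⟩ := hcoll j
      obtain rfl : i = j := by
        by_contra hij
        exact (hdisj i j hij).subset ⟨hπv, hπ v hvj ▸ ht⟩
      exact hvj
    · exact hfix v (not_exists.mp hv) ▸ hπv
  · obtain ⟨t, ht, hπ⟩ := hcoll i
    exact hπ v hv ▸ ht

theorem eq_or_mem_of_collapse_eq (hdisj : ∀ i j, i ≠ j → VS i ∩ VS j = ∅)
    (hfix : ∀ v, (∀ i, v ∉ VS i) → π v = v) (hcoll : ∀ i, ∃ t ∈ VS i, ∀ v ∈ VS i, π v = t)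
    {x y : V} (h : π x = π y) : x = y ∨ ∃ i, x ∈ VS i ∧ y ∈ VS i := by
  have hmem (i : ι) : x ∈ VS i ↔ y ∈ VS i := by
    rw [← mem_iff_of_collapse hdisj hfix hcoll x, h, mem_iff_of_collapse hdisj hfix hcoll]
  by_cases hx : ∃ i, x ∈ VS i
  · obtain ⟨i, hxi⟩ := hx
    exact Or.inr ⟨i, hxi, (hmem i).mp hxi⟩
  · have hy : ∀ i, y ∉ VS i := fun i hyi => hx ⟨i, (hmem i).mpr hyi⟩
    left
    rw [← hfix x (not_exists.mp hx), h, hfix y hy]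

end Collapse

theorem collapsed_lot_compressed_general {V E : Type} {n : ℕ}
    (P : LOG V E) (htree : P.IsTreeGraph) (hred : P.Reduced)
    (VS : Fin n → Set V) (ES : Fin n → Set E)
    (hmax : ∀ i, P.IsMaxProperSubLOT (VS i) (ES i))
    (hdisj : ∀ i j, i ≠ j → VS i ∩ VS j = ∅)
    (π : V → V)
    (hfix : ∀ v, (∀ i, v ∉ VS i) → π v = v)
    (hcoll : ∀ i, ∃ t ∈ VS i, ∀ v ∈ VS i, π v = t) :
    ∀ e : E, e ∉ (⋃ i, ES i) →
      π (P.label e) ≠ π (P.init e) ∧ π (P.label e) ≠ π (P.term e) := by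
  intro e he
  have hne_endpoint : ∀ x, (P.init e = x ∨ P.term e = x) → π (P.label e) ≠ π x := by
    intro x hx h
    rcases eq_or_mem_of_collapse_eq hdisj hfix hcoll h with hlx | ⟨i, hl, hxi⟩
    · rcases hx with rfl | rfl
      exacts [(hred.1 e).1 hlx, (hred.1 e).2 hlx]
    · refine he (Set.mem_iUnion.mpr ⟨i, (hmax i).mem_of_label_mem htree hred hl ?_⟩)
      rcases hx with rfl | rfl
      exacts [Or.inl hxi, Or.inr hxi]
  exact ⟨hne_endpoint _ (Or.inl rfl), hne_endpoint _ (Or.inr rfl)⟩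

/-- **The collapsed LOT is compressed.**
Let `P` be a reduced labeled oriented tree whose maximal proper sub-LOTs
`Tᵢ = (VS i, ES i)` are pairwise disjoint.  Choose a vertex `tᵢ` in each `Tᵢ`, replace
every edge label lying in `Tᵢ` by `tᵢ` and collapse each `Tᵢ` to `tᵢ`; this is encoded
by a collapsing map `π : V → V` that is constant, with value some `tᵢ ∈ VS i`, on each
`VS i` and is the identity elsewhere.  The resulting labeled oriented tree `P′` has edge
set `{e // e ∉ ⋃ i, ES i}`, initial-vertex map `π ∘ init`, terminal-vertex map `π ∘ term`
and label map `π ∘ label`.  Then `P′` is compressed: no edge of `P′` is labeled with one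
of its own endpoints. -/
theorem collapsed_lot_compressed {V E : Type} [Fintype V] [Fintype E] {n : ℕ}
    (P : LOG V E) (htree : P.IsTreeGraph) (hred : P.Reduced)
    (VS : Fin n → Set V) (ES : Fin n → Set E)
    (hmax : ∀ i, P.IsMaxProperSubLOT (VS i) (ES i))
    (hcompl : ∀ VS' ES', P.IsMaxProperSubLOT VS' ES' → ∃ i, VS' = VS i ∧ ES' = ES i)
    (hdisj : ∀ i j, i ≠ j → VS i ∩ VS j = ∅)
    (π : V → V)
    (hfix : ∀ v, (∀ i, v ∉ VS i) → π v = v)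
    (hcoll : ∀ i, ∃ t ∈ VS i, ∀ v ∈ VS i, π v = t) :
    ∀ e : E, e ∉ (⋃ i, ES i) →
      π (P.label e) ≠ π (P.init e) ∧ π (P.label e) ≠ π (P.term e) :=
  collapsed_lot_compressed_general P htree hred VS ES hmax hdisj π hfix hcoll
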